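/- arXiv:q-alg/9712008 — 6 statements merged into one kernel-verified Lean document; each statement's English description precedes it below -/
import Mathlib

section
/- In the algebra A^c_{ℏ,q} one has (q²+1)²·uw = c̃q² − a(1+q²)ṽ − ṽ², i.e. the product uw is expressible as a polynomial of degree 2 in ṽ. -/
/-!
STATEMENT 4: In the algebra A^c_{ℏ,q}, with a = ℏ/(1−q²), c̃ = c − a²,
ṽ = v − a, one has (q²+1)²·uw = c̃q² − a(1+q²)ṽ − ṽ², i.e. the product uw
is expressible as a polynomial of degree 2 in ṽ.
-/

noncomputable section

open FreeAlgebra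

/-- The defining relations of A^c_{ℏ,q}: each generator of the two-sided ideal
is related to 0 (generators of the free algebra: 0 = u, 1 = v, 2 = w). -/
inductive ARel (q ℏ c : ℂ) : FreeAlgebra ℂ (Fin 3) → FreeAlgebra ℂ (Fin 3) → Prop
  | r1 : ARel q ℏ c
      ((q ^ 2 + 1) • (ι ℂ (0 : Fin 3) * ι ℂ (2 : Fin 3)) + ι ℂ (1 : Fin 3) * ι ℂ (1 : Fin 3)
        + ((q ^ 2 + 1) / q ^ 2) • (ι ℂ (2 : Fin 3) * ι ℂ (0 : Fin 3))
        - algebraMap ℂ (FreeAlgebra ℂ (Fin 3)) c) 0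
  | r2 : ARel q ℏ c
      (q ^ 2 • (ι ℂ (0 : Fin 3) * ι ℂ (1 : Fin 3)) - ι ℂ (1 : Fin 3) * ι ℂ (0 : Fin 3)
        + ℏ • ι ℂ (0 : Fin 3)) 0
  | r3 : ARel q ℏ c
      ((q ^ 2 + 1) • (ι ℂ (0 : Fin 3) * ι ℂ (2 : Fin 3) - ι ℂ (2 : Fin 3) * ι ℂ (0 : Fin 3))
        + (1 - q ^ 2) • (ι ℂ (1 : Fin 3) * ι ℂ (1 : Fin 3)) - ℏ • ι ℂ (1 : Fin 3)) 0
  | r4 : ARel q ℏ c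
      (-(q ^ 2 • (ι ℂ (1 : Fin 3) * ι ℂ (2 : Fin 3))) + ι ℂ (2 : Fin 3) * ι ℂ (1 : Fin 3)
        - ℏ • ι ℂ (2 : Fin 3)) 0

theorem uw_as_polynomial_in_vtilde (q ℏ c : ℂ) (hq : q ≠ 0) (hq2 : q ^ 2 ≠ 1) :
    let mk := RingQuot.mkAlgHom ℂ (ARel q ℏ c)
    let U : RingQuot (ARel q ℏ c) := mk (ι ℂ (0 : Fin 3))
    let Wg : RingQuot (ARel q ℏ c) := mk (ι ℂ (2 : Fin 3))
    let a : ℂ := ℏ / (1 - q ^ 2)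
    let ct : ℂ := c - a ^ 2
    let Vt : RingQuot (ARel q ℏ c) :=
      mk (ι ℂ (1 : Fin 3)) - algebraMap ℂ (RingQuot (ARel q ℏ c)) a
    (q ^ 2 + 1) ^ 2 • (U * Wg)
      = algebraMap ℂ (RingQuot (ARel q ℏ c)) (ct * q ^ 2)
        - (a * (1 + q ^ 2)) • Vt - Vt ^ 2 := by
  intro mk U Wg a ct Vt
  have h1sub : 1 - q ^ 2 ≠ 0 := sub_ne_zero.mpr (Ne.symm hq2)
  set V : RingQuot (ARel q ℏ c) := mk (ι ℂ (1 : Fin 3)) with hV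
  set am := algebraMap ℂ (RingQuot (ARel q ℏ c)) with ham
  have h1 : (q ^ 2 + 1) • (U * Wg) + V * V + ((q ^ 2 + 1) / q ^ 2) • (Wg * U)
      - am c = 0 := by
    have := RingQuot.mkAlgHom_rel ℂ (ARel.r1 (q := q) (ℏ := ℏ) (c := c))
    simpa [mk, U, Wg, V, am, map_add, map_sub, map_mul, map_smul] using this
  have h3 : (q ^ 2 + 1) • (U * Wg) - (q ^ 2 + 1) • (Wg * U) + (1 - q ^ 2) • (V * V)
      - ℏ • V = 0 := by
    have := RingQuot.mkAlgHom_rel ℂ (ARel.r3 (q := q) (ℏ := ℏ) (c := c))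
    simpa [mk, U, Wg, V, am, map_add, map_sub, map_mul, map_smul, smul_sub] using this
  have hd : q ^ 2 * ((q ^ 2 + 1) / q ^ 2) = q ^ 2 + 1 := by field_simp
  have h1' : (q ^ 2 * (q ^ 2 + 1)) • (U * Wg) + (q ^ 2) • (V * V)
      + (q ^ 2 + 1) • (Wg * U) - (q ^ 2) • (am c) = 0 := by
    have := congrArg (fun x => (q ^ 2 : ℂ) • x) h1
    simpa [smul_add, smul_sub, smul_smul, hd] using this
  have hh : ℏ = a * (1 - q ^ 2) := by rw [show a = ℏ / (1 - q ^ 2) from rfl]; field_simp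
  have hVt2 : Vt ^ 2 = V * V - (2 * a) • V + am (a * a) := by
    have e : (V - am a) * (V - am a)
        = V * V - am a * V - V * am a + am a * am a := by
      simp only [sub_mul, mul_sub]; abel
    rw [show Vt = V - am a from rfl, sq, e, Algebra.commutes a V,
      show V * am a = a • V from by rw [Algebra.smul_def, Algebra.commutes],
      map_mul, two_mul, add_smul]
    abel
  have hct : ct = c - a * a := by simp [ct, sq]
  have h3' : (q ^ 2 + 1) • (U * Wg) - (q ^ 2 + 1) • (Wg * U) + (1 - q ^ 2) • (V * V)
      - (a * (1 - q ^ 2)) • V = 0 := by rw [← hh]; exact h3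
  rw [hVt2, hct]
  show _ = am ((c - a * a) * q ^ 2) - (a * (1 + q ^ 2)) • (V - am a) - _
  simp only [ham, Algebra.algebraMap_eq_smul_one] at h1' h3' ⊢
  linear_combination (norm := module) h1' + h3'

end
end

section
/- Fix an integer k ≥ 0 and set λ_j = (q^{2j}−1)(q^{2(j+1)}−1)/(q^{2j−2}(q²−1)²). Assume λ_k ≠ λ_j for all 0 ≤ j < k. Then there exists a unique monic polynomial P_k ∈ ℂ[z] of degree k such that L P_k = λ_k P_k ((ℏ,q)-special polynomial). -/
/-!
STATEMENT 6: Fix an integer k ≥ 0 and set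
λ_j = (q^{2j}−1)(q^{2(j+1)}−1)/(q^{2j−2}(q²−1)²). Assume λ_k ≠ λ_j for
0 ≤ j < k. Then there exists a unique monic polynomial P_k of degree k with
L P_k = λ_k P_k, where L is the second-order q²-difference operator
Lf = δ⁺((z² + a(q²+1)z − c̃q²)·(δ⁻f)) (the (ℏ,q)-special polynomial).
-/

noncomputable section

open Polynomial

/-- λ_k, the eigenvalue of the quantum Casimir on the spin-k component. -/
def lam (q : ℂ) (k : ℕ) : ℂ :=
  (q ^ (2 * k) - 1) * (q ^ (2 * (k + 1)) - 1) / (q ^ (2 * (k : ℤ) - 2) * (q ^ 2 - 1) ^ 2)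

theorem special_polynomial_exists_unique (q a ct : ℂ) (hq : q ≠ 0) (hq2 : q ^ 2 ≠ 1)
    (δp δm : Polynomial ℂ →ₗ[ℂ] Polynomial ℂ)
    (hδp0 : δp 1 = 0)
    (hδp : ∀ k : ℕ, δp (X ^ (k + 1)) = ((q ^ (2 * (k + 1)) - 1) / (q ^ 2 - 1)) • X ^ k)
    (hδm0 : δm 1 = 0)
    (hδm : ∀ k : ℕ,
      δm (X ^ (k + 1)) = ((q ^ (2 * (k + 1)) - 1) / (q ^ (2 * k) * (q ^ 2 - 1))) • X ^ k)
    (L : Polynomial ℂ →ₗ[ℂ] Polynomial ℂ)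
    (hL : ∀ f : Polynomial ℂ,
      L f = δp ((X ^ 2 + C (a * (q ^ 2 + 1)) * X - C (ct * q ^ 2)) * δm f))
    (k : ℕ) (hsep : ∀ j : ℕ, j < k → lam q k ≠ lam q j) :
    ∃! P : Polynomial ℂ, P.Monic ∧ P.natDegree = k ∧ L P = lam q k • P := by
  classical
  have hq2' : q ^ 2 - 1 ≠ 0 := sub_ne_zero.mpr hq2
  -- Structure of L on monomials: L (X^n) = lam q n • X^n + (lower order terms)
  have key : ∀ n : ℕ, ∃ r : Polynomial ℂ, r.degree < (n : WithBot ℕ) ∧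
      L (X ^ n) = lam q n • X ^ n + r := by
    intro n
    match n with
    | 0 =>
      refine ⟨0, by simp, ?_⟩
      have h0 : lam q 0 = 0 := by simp [lam]
      simp [hL, pow_zero, hδm0, h0]
    | m + 1 =>
      set A := a * (q ^ 2 + 1) with hA
      set B := ct * q ^ 2 with hB
      set μ := (q ^ (2 * (m + 1)) - 1) / (q ^ (2 * m) * (q ^ 2 - 1)) with hμ
      set ν := (q ^ (2 * (m + 1 + 1)) - 1) / (q ^ 2 - 1) with hν
      set ν' := (q ^ (2 * (m + 1)) - 1) / (q ^ 2 - 1) with hν'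
      have hmul : (X ^ 2 + C A * X - C B) * (μ • X ^ m)
          = μ • X ^ (m + 2) + (μ * A) • X ^ (m + 1) - (μ * B) • X ^ m := by
        simp only [smul_eq_C_mul, C_mul]
        ring
      have hcomp : L (X ^ (m + 1))
          = (μ * ν) • X ^ (m + 1)
            + ((μ * A * ν') • X ^ m - (μ * B) • δp (X ^ m)) := by
        rw [hL, hδm m, hmul, map_sub, map_add, map_smul, map_smul, map_smul,
          show m + 2 = (m + 1) + 1 from rfl, hδp (m + 1), hδp m]
        simp only [smul_smul]
        abel
      have hlam : μ * ν = lam q (m + 1) := by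
        have hz : (q : ℂ) ^ (2 * ((m + 1 : ℕ) : ℤ) - 2) = q ^ (2 * m) := by
          have h : 2 * ((m + 1 : ℕ) : ℤ) - 2 = ((2 * m : ℕ) : ℤ) := by push_cast; ring
          rw [h, zpow_natCast]
        rw [lam, hz, hμ, hν, div_mul_div_comm]
        congr 1
        ring
      have hδpm : (δp (X ^ m)).degree < ((m + 1 : ℕ) : WithBot ℕ) := by
        match m with
        | 0 => rw [pow_zero, hδp0, degree_zero]; exact WithBot.bot_lt_coe _
        | j + 1 =>
          rw [hδp j]
          refine lt_of_le_of_lt (degree_smul_le _ _) ?_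
          rw [degree_X_pow]
          exact_mod_cast Nat.lt_succ_of_lt (Nat.lt_succ_self j)
      refine ⟨(μ * A * ν') • X ^ m - (μ * B) • δp (X ^ m), ?_, by rw [hcomp, hlam]⟩
      refine lt_of_le_of_lt (degree_sub_le _ _) (max_lt ?_ ?_)
      · refine lt_of_le_of_lt (degree_smul_le _ _) ?_
        rw [degree_X_pow]
        exact_mod_cast Nat.lt_succ_self m
      · exact lt_of_le_of_lt (degree_smul_le _ _) hδpm
  -- L f as a sum over monomials
  have hLsum : ∀ (f : Polynomial ℂ) (n : ℕ), f.natDegree < n →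
      L f = ∑ i ∈ Finset.range n, f.coeff i • L (X ^ i) := by
    intro f n h
    conv_lhs => rw [f.as_sum_range' n h]
    rw [map_sum]
    exact Finset.sum_congr rfl fun i _ => by rw [← smul_X_eq_monomial, map_smul]
  -- L does not increase degree
  have hLdeg : ∀ (n : ℕ) (f : Polynomial ℂ), f.degree < (n : WithBot ℕ) →
      (L f).degree < (n : WithBot ℕ) := by
    intro n f hf
    by_cases hf0 : f = 0
    · rw [hf0, map_zero, degree_zero]; exact WithBot.bot_lt_coe _
    · have hnd : f.natDegree < n := (natDegree_lt_iff_degree_lt hf0).mpr hf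
      rw [hLsum f n hnd]
      refine lt_of_le_of_lt (degree_sum_le _ _) ?_
      refine (Finset.sup_lt_iff (show (⊥ : WithBot ℕ) < (n : WithBot ℕ) from
        WithBot.bot_lt_coe n)).mpr ?_
      intro i hi
      have hin : i < n := Finset.mem_range.mp hi
      obtain ⟨r, hr, hLX⟩ := key i
      refine lt_of_le_of_lt (degree_smul_le _ _) ?_
      rw [hLX]
      refine lt_of_le_of_lt (degree_add_le _ _) (max_lt ?_ (hr.trans ?_))
      · refine lt_of_le_of_lt (degree_smul_le _ _) ?_
        rw [degree_X_pow]
        exact_mod_cast hin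
      · exact_mod_cast hin
  -- Top coefficient of L f
  have hLcoeff : ∀ (m : ℕ) (f : Polynomial ℂ), f.degree ≤ (m : WithBot ℕ) →
      (L f).coeff m = lam q m * f.coeff m := by
    intro m f hf
    by_cases hf0 : f = 0
    · simp [hf0]
    · have hnd : f.natDegree < m + 1 := Nat.lt_succ_of_le (natDegree_le_iff_degree_le.mpr hf)
      rw [hLsum f (m + 1) hnd, finset_sum_coeff, Finset.sum_eq_single m]
      · obtain ⟨r, hr, hLX⟩ := key m
        rw [hLX, coeff_smul, coeff_add, coeff_smul, coeff_X_pow, if_pos rfl,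
          coeff_eq_zero_of_degree_lt hr]
        simp [mul_comm]
      · intro i hi hne
        have him : i < m + 1 := Finset.mem_range.mp hi
        have him' : i ≤ m := Nat.lt_succ_iff.mp him
        obtain ⟨r, hr, hLX⟩ := key i
        have hrm : r.coeff m = 0 :=
          coeff_eq_zero_of_degree_lt (hr.trans_le (by exact_mod_cast him'))
        rw [hLX, coeff_smul, coeff_add, coeff_smul, coeff_X_pow,
          if_neg (fun h => hne h.symm), hrm]
        simp
      · intro h
        exact absurd (Finset.self_mem_range_succ m) h
  -- Injectivity statement
  have hinj0 : ∀ f : Polynomial ℂ, f.degree < (k : WithBot ℕ) → L f = lam q k • f → f = 0 := by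
    intro f hdeg heig
    by_contra hf0
    have hn : f.natDegree < k := (natDegree_lt_iff_degree_lt hf0).mpr hdeg
    have h1 : (L f).coeff f.natDegree = lam q f.natDegree * f.coeff f.natDegree :=
      hLcoeff _ _ degree_le_natDegree
    rw [heig, coeff_smul, smul_eq_mul] at h1
    have hlc : f.coeff f.natDegree ≠ 0 := fun h => hf0 (leadingCoeff_eq_zero.mp h)
    exact hsep _ hn (mul_right_cancel₀ hlc h1)
  -- Finite dimensional setup
  have instFD : FiniteDimensional ℂ (degreeLT ℂ k) :=
    (degreeLTEquiv ℂ k).symm.finiteDimensional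
  set E : Polynomial ℂ →ₗ[ℂ] Polynomial ℂ := L - lam q k • LinearMap.id with hE
  have hEapp : ∀ f : Polynomial ℂ, E f = L f - lam q k • f := fun f => rfl
  have hmaps : ∀ x ∈ degreeLT ℂ k, E x ∈ degreeLT ℂ k := by
    intro x hx
    rw [mem_degreeLT] at hx ⊢
    rw [hEapp]
    refine lt_of_le_of_lt (degree_sub_le _ _) (max_lt (hLdeg k x hx) ?_)
    exact lt_of_le_of_lt (degree_smul_le _ _) hx
  set T : degreeLT ℂ k →ₗ[ℂ] degreeLT ℂ k := E.restrict hmaps with hT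
  have hTinj : Function.Injective T := by
    rw [← LinearMap.ker_eq_bot]
    rw [LinearMap.ker_eq_bot']
    intro x hx
    have hval : E (x : Polynomial ℂ) = 0 := congrArg Subtype.val hx
    rw [hEapp, sub_eq_zero] at hval
    exact Subtype.ext (hinj0 _ (mem_degreeLT.mp x.2) hval)
  have hTsurj : Function.Surjective T := LinearMap.injective_iff_surjective.mp hTinj
  -- Existence
  obtain ⟨r0, hr0, hLXk⟩ := key k
  have hg : lam q k • X ^ k - L (X ^ k) ∈ degreeLT ℂ k := by
    rw [mem_degreeLT, hLXk]
    have : lam q k • X ^ k - (lam q k • X ^ k + r0) = -r0 := by ring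
    rw [this, degree_neg]
    exact hr0
  obtain ⟨R, hR⟩ := hTsurj ⟨_, hg⟩
  have hRdeg : (R : Polynomial ℂ).degree < (k : WithBot ℕ) := mem_degreeLT.mp R.2
  have hER : E (R : Polynomial ℂ) = lam q k • X ^ k - L (X ^ k) := congrArg Subtype.val hR
  rw [hEapp] at hER
  set P : Polynomial ℂ := X ^ k + (R : Polynomial ℂ) with hP
  have hdegP : P.degree = (k : WithBot ℕ) := by
    rw [hP, degree_add_eq_left_of_degree_lt (by rwa [degree_X_pow]), degree_X_pow]
  have hndP : P.natDegree = k := natDegree_eq_of_degree_eq_some hdegP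
  have hmonic : P.Monic := by
    rw [Monic, leadingCoeff, hndP, hP, coeff_add, coeff_X_pow, if_pos rfl,
      coeff_eq_zero_of_degree_lt hRdeg, add_zero]
  have heig : L P = lam q k • P := by
    rw [hP, map_add, smul_add]
    have h1 : L (R : Polynomial ℂ) = lam q k • (R : Polynomial ℂ)
        + (lam q k • X ^ k - L (X ^ k)) := by
      rw [← hER]; ring
    rw [h1]; ring
  refine ⟨P, ⟨hmonic, hndP, heig⟩, ?_⟩
  rintro Q ⟨hQm, hQd, hQe⟩
  have hQ0 : Q ≠ 0 := hQm.ne_zero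
  have hQdeg : Q.degree = (k : WithBot ℕ) := by
    rw [degree_eq_natDegree hQ0, hQd]
  have hdd : (Q - P).degree < (k : WithBot ℕ) := by
    rw [← hQdeg]
    exact degree_sub_lt (by rw [hQdeg, hdegP]) hQ0 (by rw [hQm.leadingCoeff, hmonic.leadingCoeff])
  have hEE : L (Q - P) = lam q k • (Q - P) := by
    rw [map_sub, smul_sub, hQe, heig]
  have := hinj0 (Q - P) hdd hEE
  exact sub_eq_zero.mp this
end
end

section
/- If (ν_k)_{k≥0} is a sequence of complex numbers with ν_0 = 1, ν_1 = 0 satisfying the three-term recurrence ν_{k+1}(q^{2k+4}−1) + ν_k · a(q^{2k+2}−1)(1+q²) − ν_{k−1}(q^{2k}−1)q²c̃ = 0 for all k ≥ 1, then such a sequence is unique and is given in closed form by ν_k = μ_k = (q²−1)(x₂x₁^k − x₁x₂^k)/((q^{2k+2}−1)(x₂−x₁)) for all k ≥ 0; in particular μ_0 = 1, μ_1 = 0 and (μ_k) satisfies this recurrence. (These are the moments Int(ṽ^k) of the (ℏ,q)-integral normalized by Int(1) = 1, Int(ṽ) = 0.) -/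
/-!
STATEMENT 8: If (ν_k) is a sequence of complex numbers with ν_0 = 1, ν_1 = 0
satisfying ν_{k+1}(q^{2k+4}−1) + ν_k·a(q^{2k+2}−1)(1+q²) − ν_{k−1}(q^{2k}−1)q²c̃ = 0
for all k ≥ 1, then it is unique and given by
ν_k = μ_k = (q²−1)(x₂x₁^k − x₁x₂^k)/((q^{2k+2}−1)(x₂−x₁));
in particular μ_0 = 1, μ_1 = 0 and (μ_k) satisfies the recurrence.
Here x₁ ≠ x₂ are the roots of x² + a(1+q²)x − q²c̃ = 0.
-/

noncomputable section

/-- The moments μ_k = Int(ṽ^k) of the (ℏ,q)-integral. -/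
def mu (q x₁ x₂ : ℂ) (k : ℕ) : ℂ :=
  (q ^ 2 - 1) * (x₂ * x₁ ^ k - x₁ * x₂ ^ k) / ((q ^ (2 * k + 2) - 1) * (x₂ - x₁))

theorem moments_recurrence_and_closed_form (q a ct x₁ x₂ : ℂ) (hq : q ≠ 0)
    (hqk : ∀ k : ℕ, q ^ (2 * k + 2) ≠ 1)
    (hne : x₁ ≠ x₂)
    (hsum : x₁ + x₂ = -(a * (1 + q ^ 2)))
    (hprod : x₁ * x₂ = -(q ^ 2 * ct)) :
    (mu q x₁ x₂ 0 = 1 ∧ mu q x₁ x₂ 1 = 0 ∧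
      ∀ k : ℕ, 1 ≤ k →
        mu q x₁ x₂ (k + 1) * (q ^ (2 * k + 4) - 1) +
          mu q x₁ x₂ k * a * (q ^ (2 * k + 2) - 1) * (1 + q ^ 2) -
          mu q x₁ x₂ (k - 1) * (q ^ (2 * k) - 1) * q ^ 2 * ct = 0) ∧
    ∀ ν : ℕ → ℂ,
      ν 0 = 1 → ν 1 = 0 →
      (∀ k : ℕ, 1 ≤ k →
        ν (k + 1) * (q ^ (2 * k + 4) - 1) +
          ν k * a * (q ^ (2 * k + 2) - 1) * (1 + q ^ 2) -
          ν (k - 1) * (q ^ (2 * k) - 1) * q ^ 2 * ct = 0) →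
      ν = mu q x₁ x₂ := by
  have hd : ∀ k : ℕ, q ^ (2 * k + 2) - 1 ≠ 0 := fun k => sub_ne_zero.mpr (hqk k)
  have hx : x₂ - x₁ ≠ 0 := sub_ne_zero.mpr (Ne.symm hne)
  -- mu k times its denominator factor
  have hmul : ∀ k : ℕ, mu q x₁ x₂ k * (q ^ (2 * k + 2) - 1)
      = (q ^ 2 - 1) * (x₂ * x₁ ^ k - x₁ * x₂ ^ k) / (x₂ - x₁) := by
    intro k
    unfold mu
    field_simp
    rw [mul_div_cancel_right₀ _ (hd k)]
  -- numerator identity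
  have hnum : ∀ k : ℕ,
      (q ^ 2 - 1) * (x₂ * x₁ ^ (k + 2) - x₁ * x₂ ^ (k + 2)) / (x₂ - x₁)
        + (q ^ 2 - 1) * (x₂ * x₁ ^ (k + 1) - x₁ * x₂ ^ (k + 1)) / (x₂ - x₁)
            * a * (1 + q ^ 2)
        - (q ^ 2 - 1) * (x₂ * x₁ ^ k - x₁ * x₂ ^ k) / (x₂ - x₁) * q ^ 2 * ct
        = 0 := by
    intro k
    linear_combination
      ((q ^ 2 - 1) * (x₂ * x₁ ^ (k + 1) - x₁ * x₂ ^ (k + 1)) / (x₂ - x₁)) * hsum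
        - ((q ^ 2 - 1) * (x₂ * x₁ ^ k - x₁ * x₂ ^ k) / (x₂ - x₁)) * hprod
  have h0 : mu q x₁ x₂ 0 = 1 := by
    unfold mu
    have := hd 0
    field_simp
  have h1 : mu q x₁ x₂ 1 = 0 := by
    unfold mu
    simp [div_eq_zero_iff]
    left; right
    ring
  have hrec : ∀ k : ℕ, 1 ≤ k →
      mu q x₁ x₂ (k + 1) * (q ^ (2 * k + 4) - 1) +
        mu q x₁ x₂ k * a * (q ^ (2 * k + 2) - 1) * (1 + q ^ 2) -
        mu q x₁ x₂ (k - 1) * (q ^ (2 * k) - 1) * q ^ 2 * ct = 0 := by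
    rintro k hk
    obtain ⟨m, rfl⟩ := Nat.exists_eq_add_of_le hk
    rw [show (1 + m) - 1 = m from by omega]
    have A := hmul (1 + m + 1)
    rw [show 2 * (1 + m + 1) + 2 = 2 * (1 + m) + 4 from by ring] at A
    have B := hmul (1 + m)
    have C := hmul m
    rw [show 2 * m + 2 = 2 * (1 + m) from by ring] at C
    linear_combination A + a * (1 + q ^ 2) * B - q ^ 2 * ct * C + hnum m
  refine ⟨⟨h0, h1, hrec⟩, ?_⟩
  intro ν hν0 hν1 hνrec
  funext k
  induction k using Nat.strong_induction_on with
  | _ k ih =>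
    match k with
    | 0 => rw [hν0, h0]
    | 1 => rw [hν1, h1]
    | (n + 2) =>
      have hn1 : 1 ≤ n + 1 := by omega
      have hν := hνrec (n + 1) hn1
      have hμ := hrec (n + 1) hn1
      have e : (n + 1) - 1 = n := by omega
      rw [e] at hν hμ
      rw [ih (n + 1) (by omega), ih n (by omega)] at hν
      have hcoef : q ^ (2 * (n + 1) + 4) - 1 ≠ 0 := by
        have := hd (n + 2)
        have e2 : 2 * (n + 2) + 2 = 2 * (n + 1) + 4 := by ring
        rwa [e2] at this
      have : ν (n + 1 + 1) * (q ^ (2 * (n + 1) + 4) - 1)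
          = mu q x₁ x₂ (n + 1 + 1) * (q ^ (2 * (n + 1) + 4) - 1) := by
        linear_combination hν - hμ
      exact mul_right_cancel₀ hcoef this
end
end

section
/- Assume additionally |q| < 1. Then for every polynomial f ∈ ℂ[z], the series Σ_{m=0}^∞ (x₂·f(x₁q^{2m}) − x₁·f(x₂q^{2m}))·q^{2m} converges and Int(f) = (1−q²)(x₂−x₁)⁻¹ · Σ_{m=0}^∞ (x₂·f(x₁q^{2m}) − x₁·f(x₂q^{2m}))·q^{2m}. (This is the (ℏ,q)-generalization of the Jackson integral.) -/
/-!
STATEMENT 9: Assume 0 < |q| < 1. Then for every polynomial f, the series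
Σ_{m=0}^∞ (x₂·f(x₁q^{2m}) − x₁·f(x₂q^{2m}))·q^{2m} converges and
Int(f) = (1−q²)(x₂−x₁)⁻¹ · Σ_{m=0}^∞ (x₂·f(x₁q^{2m}) − x₁·f(x₂q^{2m}))·q^{2m},
where Int is the (ℏ,q)-integral, the linear functional with Int(z^k) = μ_k.
(The (ℏ,q)-generalization of the Jackson integral.)
-/

noncomputable section

open Polynomial

lemma hterm_eq (q x₁ x₂ : ℂ) (k m : ℕ) :
    (x₂ * (x₁ * q ^ (2*m))^k - x₁ * (x₂ * q^(2*m))^k) * q^(2*m)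
      = (x₂ * x₁^k - x₁ * x₂^k) * (q^(2*k+2))^m := by
  rw [mul_pow, mul_pow]; ring

lemma geom_part (q x₁ x₂ : ℂ) (hq1 : ‖q‖ < 1) (k : ℕ) :
    Summable (fun m : ℕ => (x₂ * (x₁ * q ^ (2*m))^k - x₁ * (x₂ * q^(2*m))^k) * q^(2*m)) ∧
    ∑' m : ℕ, (x₂ * (x₁ * q ^ (2*m))^k - x₁ * (x₂ * q^(2*m))^k) * q^(2*m)
      = (x₂ * x₁^k - x₁ * x₂^k) * (1 - q^(2*k+2))⁻¹ := by
  have hnorm : ‖q ^ (2*k+2)‖ < 1 := by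
    rw [norm_pow]; exact pow_lt_one₀ (norm_nonneg q) hq1 (by omega)
  refine ⟨?_, ?_⟩
  · simp only [hterm_eq]
    exact (summable_geometric_of_norm_lt_one hnorm).mul_left _
  · simp only [hterm_eq]
    rw [tsum_mul_left, tsum_geometric_of_norm_lt_one hnorm]

theorem hq_integral_as_jackson_type_sum (q a ct x₁ x₂ : ℂ) (hq : q ≠ 0)
    (hq1 : ‖q‖ < 1)
    (hne : x₁ ≠ x₂)
    (hsum : x₁ + x₂ = -(a * (1 + q ^ 2)))
    (hprod : x₁ * x₂ = -(q ^ 2 * ct))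
    (Int : Polynomial ℂ →ₗ[ℂ] ℂ)
    (hInt : ∀ k : ℕ, Int (X ^ k) = mu q x₁ x₂ k) :
    ∀ f : Polynomial ℂ,
      Summable (fun m : ℕ =>
        (x₂ * f.eval (x₁ * q ^ (2 * m)) - x₁ * f.eval (x₂ * q ^ (2 * m))) * q ^ (2 * m)) ∧
      Int f = (1 - q ^ 2) * (x₂ - x₁)⁻¹ *
        ∑' m : ℕ,
          (x₂ * f.eval (x₁ * q ^ (2 * m)) - x₁ * f.eval (x₂ * q ^ (2 * m))) * q ^ (2 * m) := by
  intro f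
  set n := f.natDegree + 1 with hn
  have hterm : ∀ m : ℕ,
      (x₂ * f.eval (x₁ * q ^ (2 * m)) - x₁ * f.eval (x₂ * q ^ (2 * m))) * q ^ (2 * m)
      = ∑ k ∈ Finset.range n, f.coeff k *
          ((x₂ * (x₁ * q ^ (2*m))^k - x₁ * (x₂ * q^(2*m))^k) * q^(2*m)) := by
    intro m
    rw [Polynomial.eval_eq_sum_range (p := f), Polynomial.eval_eq_sum_range (p := f),
      Finset.mul_sum, Finset.mul_sum, ← Finset.sum_sub_distrib, Finset.sum_mul]
    exact Finset.sum_congr rfl fun k _ => by ring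
  have hsummable : Summable (fun m : ℕ =>
      (x₂ * f.eval (x₁ * q ^ (2 * m)) - x₁ * f.eval (x₂ * q ^ (2 * m))) * q ^ (2 * m)) := by
    have := fun k => ((geom_part q x₁ x₂ hq1 k).1).mul_left (f.coeff k)
    simp only [hterm]
    exact summable_sum (fun k _ => this k)
  refine ⟨hsummable, ?_⟩
  have htsum : (∑' m : ℕ,
      (x₂ * f.eval (x₁ * q ^ (2 * m)) - x₁ * f.eval (x₂ * q ^ (2 * m))) * q ^ (2 * m))
      = ∑ k ∈ Finset.range n, f.coeff k *
          ((x₂ * x₁^k - x₁ * x₂^k) * (1 - q^(2*k+2))⁻¹) := by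
    simp only [hterm]
    rw [Summable.tsum_finsetSum (fun k _ => ((geom_part q x₁ x₂ hq1 k).1).mul_left (f.coeff k))]
    exact Finset.sum_congr rfl fun k _ => by
      rw [tsum_mul_left, (geom_part q x₁ x₂ hq1 k).2]
  have hIntf : Int f = ∑ k ∈ Finset.range n, f.coeff k * mu q x₁ x₂ k := by
    conv_lhs => rw [Polynomial.as_sum_range' f n (Nat.lt_succ_self _)]
    rw [map_sum]
    exact Finset.sum_congr rfl fun k _ => by
      rw [← Polynomial.smul_X_eq_monomial, map_smul, hInt, smul_eq_mul]
  rw [hIntf, htsum, Finset.mul_sum]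
  refine Finset.sum_congr rfl fun k _ => ?_
  have hx : x₂ - x₁ ≠ 0 := sub_ne_zero.mpr (Ne.symm hne)
  have hq2 : q ^ (2*k+2) - 1 ≠ 0 := by
    intro h
    have h1 : q ^ (2*k+2) = 1 := by linear_combination h
    have : ‖q ^ (2*k+2)‖ < 1 := by
      rw [norm_pow]; exact pow_lt_one₀ (norm_nonneg q) hq1 (by omega)
    rw [h1, norm_one] at this; exact lt_irrefl _ this
  have hq2' : (1:ℂ) - q ^ (2*k+2) ≠ 0 := fun h => hq2 (by linear_combination -h)
  rw [mu]
  field_simp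
  ring

end
end

section
/- In the case a = 0 (i.e. ℏ = 0): for every integer k ≥ 1, assuming λ_k ≠ λ_j for all 0 ≤ j < k, the unique monic eigenpolynomial P_k of L with eigenvalue λ_k satisfies Int(P_k) = 0. -/
/-!
STATEMENT 10: In the case a = 0 (ℏ = 0): for every integer k ≥ 1, assuming
λ_k ≠ λ_j for 0 ≤ j < k, the unique monic eigenpolynomial P_k of
Lf = δ⁺((z² − c̃q²)·(δ⁻f)) with eigenvalue λ_k satisfies Int(P_k) = 0, where
Int is the linear functional with Int(z^k) = μ_k (the Jackson integral).
-/

noncomputable section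

open Polynomial

lemma qpow_ne_one {q : ℂ} (hq1 : ‖q‖ < 1) {n : ℕ} (hn : n ≠ 0) : q ^ n ≠ 1 := by
  intro h
  have h2 : ‖q ^ n‖ < 1 := by
    rw [norm_pow]; exact pow_lt_one₀ (norm_nonneg q) hq1 hn
  rw [h] at h2; simp at h2

theorem integral_of_special_polynomial_vanishes (q ct x₁ x₂ : ℂ) (hq : q ≠ 0)
    (hq1 : ‖q‖ < 1) (hct : ct ≠ 0)
    (hne : x₁ ≠ x₂) (hsum : x₁ + x₂ = 0) (hprod : x₁ * x₂ = -(q ^ 2 * ct))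
    (δp δm : Polynomial ℂ →ₗ[ℂ] Polynomial ℂ)
    (hδp0 : δp 1 = 0)
    (hδp : ∀ k : ℕ, δp (X ^ (k + 1)) = ((q ^ (2 * (k + 1)) - 1) / (q ^ 2 - 1)) • X ^ k)
    (hδm0 : δm 1 = 0)
    (hδm : ∀ k : ℕ,
      δm (X ^ (k + 1)) = ((q ^ (2 * (k + 1)) - 1) / (q ^ (2 * k) * (q ^ 2 - 1))) • X ^ k)
    (L : Polynomial ℂ →ₗ[ℂ] Polynomial ℂ)
    (hL : ∀ f : Polynomial ℂ, L f = δp ((X ^ 2 - C (ct * q ^ 2)) * δm f))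
    (Int : Polynomial ℂ →ₗ[ℂ] ℂ)
    (hInt : ∀ k : ℕ, Int (X ^ k) = mu q x₁ x₂ k)
    (k : ℕ) (hk : 1 ≤ k) (hsep : ∀ j : ℕ, j < k → lam q k ≠ lam q j)
    (P : Polynomial ℂ) (hmon : P.Monic) (hdeg : P.natDegree = k)
    (heig : L P = lam q k • P) :
    Int P = 0 := by
  have hx2 : x₂ = -x₁ := by linear_combination hsum
  subst hx2
  have hx1 : x₁ ≠ 0 := by
    intro h; apply hne; rw [h]; ring
  have hq2 : q ^ 2 - 1 ≠ 0 := sub_ne_zero.mpr (qpow_ne_one hq1 two_ne_zero)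
  have hd : ∀ m : ℕ, q ^ (2 * m + 2) - 1 ≠ 0 := fun m =>
    sub_ne_zero.mpr (qpow_ne_one hq1 (by omega))
  have hxd : -x₁ - x₁ ≠ 0 := by
    intro h; apply hx1; linear_combination (-1/2 : ℂ) * h
  have ha : ct * q ^ 2 = x₁ ^ 2 := by linear_combination hprod
  -- Int ∘ L vanishes on monomials
  have hIntL : ∀ m : ℕ, Int (L (X ^ m : Polynomial ℂ)) = 0 := by
    intro m
    match m with
    | 0 => simp [hL, hδm0]
    | 1 =>
      have em : δm (X ^ 1 : Polynomial ℂ) =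
          ((q ^ (2 * 1) - 1) / (q ^ (2 * 0) * (q ^ 2 - 1))) • X ^ 0 := hδm 0
      have expand : ((X : Polynomial ℂ) ^ 2 - C (ct * q ^ 2)) * X ^ 0
          = X ^ 2 - (ct * q ^ 2) • (1 : Polynomial ℂ) := by
        rw [smul_eq_C_mul]; ring
      have hmu1 : mu q x₁ (-x₁) 1 = 0 := by
        rw [mu, show ((-x₁) * x₁ ^ 1 - x₁ * (-x₁) ^ 1) = 0 by ring, mul_zero, zero_div]
      rw [hL, em, mul_smul_comm, map_smul, map_smul, expand, map_sub, map_smul, hδp0,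
        smul_zero, sub_zero, hδp 1, map_smul, hInt, hmu1]
      simp
    | (n + 2) =>
      have em : δm (X ^ (n + 2) : Polynomial ℂ) =
          ((q ^ (2 * (n + 2)) - 1) / (q ^ (2 * (n + 1)) * (q ^ 2 - 1))) • X ^ (n + 1) :=
        hδm (n + 1)
      have ep1 : δp (X ^ (n + 3) : Polynomial ℂ) =
          ((q ^ (2 * (n + 3)) - 1) / (q ^ 2 - 1)) • X ^ (n + 2) := hδp (n + 2)
      have ep2 : δp (X ^ (n + 1) : Polynomial ℂ) =
          ((q ^ (2 * (n + 1)) - 1) / (q ^ 2 - 1)) • X ^ n := hδp n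
      have expand : ((X : Polynomial ℂ) ^ 2 - C (ct * q ^ 2)) * X ^ (n + 1)
          = X ^ (n + 3) - (ct * q ^ 2) • X ^ (n + 1) := by
        rw [smul_eq_C_mul]; ring
      have key : (q ^ (2 * (n + 3)) - 1) / (q ^ 2 - 1) * mu q x₁ (-x₁) (n + 2)
          - ct * q ^ 2 * ((q ^ (2 * (n + 1)) - 1) / (q ^ 2 - 1) * mu q x₁ (-x₁) n) = 0 := by
        rw [ha, mu, mu]
        have h1 := hd (n + 2)
        have h2 := hd n
        field_simp
        ring
      rw [hL, em, mul_smul_comm, map_smul, map_smul, expand, map_sub, ep1, map_smul, ep2,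
        map_sub, map_smul, map_smul, map_smul, hInt, hInt, smul_eq_mul, smul_eq_mul,
        smul_eq_mul, smul_eq_mul]
      rw [key, mul_zero]
  -- extend to all polynomials
  have hIntL' : ∀ f : Polynomial ℂ, Int (L f) = 0 := by
    intro f
    induction f using Polynomial.induction_on' with
    | add p r hp hr => rw [map_add, map_add, hp, hr, add_zero]
    | monomial n a =>
      rw [← C_mul_X_pow_eq_monomial, ← smul_eq_C_mul, map_smul, map_smul, hIntL, smul_zero]
  have h0 := hIntL' P
  rw [heig, map_smul, smul_eq_mul] at h0
  have hlamk : lam q k ≠ 0 := by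
    have h00 : lam q 0 = 0 := by simp [lam]
    have := hsep 0 hk
    rw [h00] at this; exact this
  exact (mul_eq_zero.mp h0).resolve_left hlamk


end
end

section
/- In the case a = 0 (i.e. ℏ = 0): for all integers k ≠ l with k, l ≥ 0, assuming λ_m ≠ λ_j for all 0 ≤ j < m ≤ max(k,l), the monic eigenpolynomials satisfy the orthogonality relation Int(P_k · P_l) = 0. (These are the orthogonality relations for the q-Legendre polynomials with respect to the Jackson integral.) -/
/-!
STATEMENT 11: In the case a = 0 (ℏ = 0): for all integers k ≠ l, assuming
λ_m ≠ λ_j for all 0 ≤ j < m ≤ max(k,l), the monic eigenpolynomials P_k, P_l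
of Lf = δ⁺((z² − c̃q²)·(δ⁻f)) satisfy the orthogonality relation
Int(P_k·P_l) = 0, where Int is the linear functional with Int(z^k) = μ_k
(the orthogonality of q-Legendre polynomials w.r.t. the Jackson integral).
-/

noncomputable section

open Polynomial

def bb (q ct : ℂ) (n : ℕ) : ℂ :=
  ct * q ^ 2 * (q ^ (2 * n) - 1) * (q ^ (2 * n) - q ^ 2) / (q ^ (2 * n) * (q ^ 2 - 1) ^ 2)

lemma lam_eq (q : ℂ) (hq : q ≠ 0) (n : ℕ) :
    lam q n = (q ^ (2 * n) - 1) * (q ^ (2 * n) * q ^ 2 - 1) * q ^ 2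
      / (q ^ (2 * n) * (q ^ 2 - 1) ^ 2) := by
  unfold lam
  have h1 : (q : ℂ) ^ (2 * (n : ℤ) - 2) = q ^ (2 * n) / q ^ 2 := by
    rw [zpow_sub₀ hq]
    rw [show (2 * (n:ℤ)) = ((2*n : ℕ) : ℤ) by push_cast; ring, zpow_natCast,
      show ((2:ℤ)) = ((2:ℕ):ℤ) from rfl, zpow_natCast]
  rw [h1, show 2 * (n + 1) = 2*n + 2 by ring, pow_add]
  have h2 : q ^ (2*n) ≠ 0 := pow_ne_zero _ hq
  have h3 : (q:ℂ)^2 ≠ 0 := pow_ne_zero _ hq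
  field_simp

lemma bb_zero (q ct : ℂ) : bb q ct 0 = 0 := by simp [bb]

lemma bb_one (q ct : ℂ) : bb q ct 1 = 0 := by simp [bb]

lemma lam_zero (q : ℂ) : lam q 0 = 0 := by simp [lam]

lemma mu_eq (q x₁ : ℂ) (hx0 : x₁ ≠ 0) (k : ℕ) (hD : q ^ (2 * k + 2) - 1 ≠ 0) :
    mu q x₁ (-x₁) k =
      if Even k then (q ^ 2 - 1) * x₁ ^ k / (q ^ (2 * k + 2) - 1) else 0 := by
  unfold mu
  rcases Nat.even_or_odd k with he | ho
  · rw [if_pos he, he.neg_pow]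
    have h2 : (-2 : ℂ) * x₁ ≠ 0 := by simp [hx0]
    rw [show -x₁ * x₁ ^ k - x₁ * x₁ ^ k = -2 * x₁ * x₁ ^ k by ring,
        show (q ^ 2 - 1) * (-2 * x₁ * x₁ ^ k) = -2 * x₁ * ((q ^ 2 - 1) * x₁ ^ k) by ring,
        show (q ^ (2 * k + 2) - 1) * (-x₁ - x₁) = -2 * x₁ * (q ^ (2 * k + 2) - 1) by ring,
        mul_div_mul_left _ _ h2]
  · rw [if_neg (Nat.not_even_iff_odd.mpr ho), ho.neg_pow]
    rw [show -x₁ * x₁ ^ k - x₁ * -x₁ ^ k = 0 by ring]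
    simp

set_option maxHeartbeats 4000000 in
lemma key_alg (q ct a v y : ℂ) (hq2 : q ≠ 0) (h1 : q ^ 2 - 1 ≠ 0)
    (ha : a ≠ 0) (hv : v ≠ 0) (hd1 : a * v * q ^ 4 - 1 ≠ 0)
    (hd2 : a * v - 1 ≠ 0) :
    ((a * q ^ 2 - 1) * (a * q ^ 2 * q ^ 2 - 1) * q ^ 2 / (a * q ^ 2 * (q ^ 2 - 1) ^ 2)) *
        ((q ^ 2 - 1) * (y * (q ^ 2 * ct)) / (a * v * q ^ 4 - 1)) -
      (ct * q ^ 2 * (a * q ^ 2 - 1) * (a * q ^ 2 - q ^ 2) / (a * q ^ 2 * (q ^ 2 - 1) ^ 2)) *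
        ((q ^ 2 - 1) * y / (a * v - 1)) =
    ((v - 1) * (v * q ^ 2 - 1) * q ^ 2 / (v * (q ^ 2 - 1) ^ 2)) *
        ((q ^ 2 - 1) * (y * (q ^ 2 * ct)) / (a * v * q ^ 4 - 1)) -
      (ct * q ^ 2 * (v - 1) * (v - q ^ 2) / (v * (q ^ 2 - 1) ^ 2)) *
        ((q ^ 2 - 1) * y / (a * v - 1)) := by
  have hD1 : a * q ^ 2 * (q ^ 2 - 1) ^ 2 ≠ 0 :=
    mul_ne_zero (mul_ne_zero ha (pow_ne_zero _ hq2)) (pow_ne_zero _ h1)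
  have hDv : v * (q ^ 2 - 1) ^ 2 ≠ 0 := mul_ne_zero hv (pow_ne_zero _ h1)
  rw [div_mul_div_comm, div_mul_div_comm, div_mul_div_comm, div_mul_div_comm,
    div_sub_div _ _ (mul_ne_zero hD1 hd1) (mul_ne_zero hD1 hd2),
    div_sub_div _ _ (mul_ne_zero hDv hd1) (mul_ne_zero hDv hd2),
    div_eq_div_iff (mul_ne_zero (mul_ne_zero hD1 hd1) (mul_ne_zero hD1 hd2))
      (mul_ne_zero (mul_ne_zero hDv hd1) (mul_ne_zero hDv hd2))]
  ring

lemma master (q ct x₁ : ℂ) (hq : q ≠ 0) (h1 : q ^ 2 - 1 ≠ 0)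
    (hone : ∀ j : ℕ, 1 ≤ j → q ^ j ≠ 1) (hx0 : x₁ ≠ 0) (hx2 : x₁ ^ 2 = q ^ 2 * ct)
    (n m : ℕ) :
    lam q n * mu q x₁ (-x₁) (n + m) - bb q ct n * mu q x₁ (-x₁) (n + m - 2)
      = lam q m * mu q x₁ (-x₁) (n + m) - bb q ct m * mu q x₁ (-x₁) (n + m - 2) := by
  have hDk : ∀ j : ℕ, q ^ (2 * j + 2) - 1 ≠ 0 := fun j =>
    sub_ne_zero.mpr (hone _ (by omega))
  suffices H : ∀ n m : ℕ, n ≤ m →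
      lam q n * mu q x₁ (-x₁) (n + m) - bb q ct n * mu q x₁ (-x₁) (n + m - 2)
        = lam q m * mu q x₁ (-x₁) (n + m) - bb q ct m * mu q x₁ (-x₁) (n + m - 2) by
    rcases le_total n m with h | h
    · exact H n m h
    · have := (H m n h).symm
      rwa [Nat.add_comm m n] at this
  intro n m hnm
  rcases Nat.lt_or_ge (n + m) 2 with hs | hs
  · -- n + m ≤ 1, so n = 0
    have hn0 : n = 0 := by omega
    subst hn0
    rcases Nat.lt_or_ge m 1 with hm | hm
    · have : m = 0 := by omega
      subst this; rfl
    · have : m = 1 := by omega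
      subst this
      have hmu1 : mu q x₁ (-x₁) 1 = 0 := by
        rw [mu_eq q x₁ hx0 1 (hDk 1), if_neg (by decide)]
      simp [hmu1, lam_zero, bb_zero, bb_one]
  · -- n + m ≥ 2
    rcases Nat.even_or_odd (n + m) with he | ho
    · -- even case: use key_alg
      have hm1 : 1 ≤ m := by omega
      obtain ⟨m', rfl⟩ : ∃ m'', m = m'' + 1 := ⟨m - 1, by omega⟩
      have hse : Even (n + (m' + 1)) := he
      have hse2 : Even (n + (m' + 1) - 2) := by
        rcases he with ⟨t, ht⟩
        exact ⟨t - 1, by omega⟩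
      have e1 : mu q x₁ (-x₁) (n + (m' + 1)) =
          (q ^ 2 - 1) * (x₁ ^ (n + (m' + 1) - 2) * (q ^ 2 * ct)) /
            (q ^ (2 * m') * q ^ (2 * n) * q ^ 4 - 1) := by
        rw [mu_eq q x₁ hx0 _ (hDk _), if_pos hse]
        congr 1
        · congr 1
          rw [← hx2, ← pow_add]
          congr 1
          omega
        · rw [← pow_add, ← pow_add]
          congr 2
          omega
      have e2 : mu q x₁ (-x₁) (n + (m' + 1) - 2) =
          (q ^ 2 - 1) * x₁ ^ (n + (m' + 1) - 2) / (q ^ (2 * m') * q ^ (2 * n) - 1) := by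
        rw [mu_eq q x₁ hx0 _ (hDk _), if_pos hse2]
        congr 2
        rw [← pow_add]
        congr 1
        omega
      have hd1' : q ^ (2 * m') * q ^ (2 * n) * q ^ 4 - 1 ≠ 0 := by
        rw [← pow_add, ← pow_add]
        exact sub_ne_zero.mpr (hone _ (by omega))
      have hd2' : q ^ (2 * m') * q ^ (2 * n) - 1 ≠ 0 := by
        rw [← pow_add]
        exact sub_ne_zero.mpr (hone _ (by omega))
      have elam : lam q (m' + 1) =
          (q ^ (2 * m') * q ^ 2 - 1) * (q ^ (2 * m') * q ^ 2 * q ^ 2 - 1) * q ^ 2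
            / (q ^ (2 * m') * q ^ 2 * (q ^ 2 - 1) ^ 2) := by
        rw [lam_eq q hq, show 2 * (m' + 1) = 2 * m' + 2 by ring, pow_add]
      have ebb : bb q ct (m' + 1) =
          ct * q ^ 2 * (q ^ (2 * m') * q ^ 2 - 1) * (q ^ (2 * m') * q ^ 2 - q ^ 2)
            / (q ^ (2 * m') * q ^ 2 * (q ^ 2 - 1) ^ 2) := by
        rw [bb, show 2 * (m' + 1) = 2 * m' + 2 by ring, pow_add]
      rw [e1, e2, elam, ebb, lam_eq q hq n, bb]
      linear_combination
        -key_alg q ct (q ^ (2 * m')) (q ^ (2 * n)) (x₁ ^ (n + (m' + 1) - 2)) hq h1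
          (pow_ne_zero _ hq) (pow_ne_zero _ hq) hd1' hd2'
    · -- odd case: both moments vanish
      have h1' : mu q x₁ (-x₁) (n + m) = 0 := by
        rw [mu_eq q x₁ hx0 _ (hDk _), if_neg (Nat.not_even_iff_odd.mpr ho)]
      have h2' : mu q x₁ (-x₁) (n + m - 2) = 0 := by
        rw [mu_eq q x₁ hx0 _ (hDk _), if_neg]
        rw [Nat.not_even_iff_odd]
        rcases ho with ⟨t, ht⟩
        exact ⟨t - 1, by omega⟩
      rw [h1', h2']
      ring

lemma coeff1 (q A : ℂ) (hq : q ≠ 0) (hA : A ≠ 0) (h1 : q ^ 2 - 1 ≠ 0) :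
    ((A * q ^ 2 - 1) / (A * (q ^ 2 - 1))) * ((A * q ^ 4 - 1) / (q ^ 2 - 1)) =
      (A * q ^ 2 - 1) * (A * q ^ 2 * q ^ 2 - 1) * q ^ 2 / (A * q ^ 2 * (q ^ 2 - 1) ^ 2) := by
  field_simp

lemma coeff2 (q A ct : ℂ) (hq : q ≠ 0) (hA : A ≠ 0) (h1 : q ^ 2 - 1 ≠ 0) :
    ((A * q ^ 2 - 1) / (A * (q ^ 2 - 1))) * (ct * q ^ 2) * ((A - 1) / (q ^ 2 - 1)) =
      ct * q ^ 2 * (A * q ^ 2 - 1) * (A * q ^ 2 - q ^ 2) / (A * q ^ 2 * (q ^ 2 - 1) ^ 2) := by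
  field_simp

theorem special_polynomials_orthogonal (q ct x₁ x₂ : ℂ) (hq : q ≠ 0)
    (hq1 : ‖q‖ < 1) (hct : ct ≠ 0)
    (hne : x₁ ≠ x₂) (hsum : x₁ + x₂ = 0) (hprod : x₁ * x₂ = -(q ^ 2 * ct))
    (δp δm : Polynomial ℂ →ₗ[ℂ] Polynomial ℂ)
    (hδp0 : δp 1 = 0)
    (hδp : ∀ k : ℕ, δp (X ^ (k + 1)) = ((q ^ (2 * (k + 1)) - 1) / (q ^ 2 - 1)) • X ^ k)
    (hδm0 : δm 1 = 0)
    (hδm : ∀ k : ℕ,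
      δm (X ^ (k + 1)) = ((q ^ (2 * (k + 1)) - 1) / (q ^ (2 * k) * (q ^ 2 - 1))) • X ^ k)
    (L : Polynomial ℂ →ₗ[ℂ] Polynomial ℂ)
    (hL : ∀ f : Polynomial ℂ, L f = δp ((X ^ 2 - C (ct * q ^ 2)) * δm f))
    (Int : Polynomial ℂ →ₗ[ℂ] ℂ)
    (hInt : ∀ k : ℕ, Int (X ^ k) = mu q x₁ x₂ k)
    (k l : ℕ) (hkl : k ≠ l)
    (hsep : ∀ m j : ℕ, j < m → m ≤ max k l → lam q m ≠ lam q j)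
    (P Q : Polynomial ℂ)
    (hPmon : P.Monic) (hPdeg : P.natDegree = k) (hPeig : L P = lam q k • P)
    (hQmon : Q.Monic) (hQdeg : Q.natDegree = l) (hQeig : L Q = lam q l • Q) :
    Int (P * Q) = 0 := by
  -- basic facts
  have hone : ∀ j : ℕ, 1 ≤ j → q ^ j ≠ 1 := by
    intro j hj h
    have h2 : ‖q ^ j‖ < 1 := by
      rw [norm_pow]
      exact pow_lt_one₀ (norm_nonneg q) hq1 (by omega)
    rw [h] at h2
    simp at h2
  have h1 : q ^ 2 - 1 ≠ 0 := sub_ne_zero.mpr (hone 2 (by norm_num))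
  have hx2eq : x₂ = -x₁ := by linear_combination hsum
  have hx1sq : x₁ ^ 2 = q ^ 2 * ct := by linear_combination x₁ * hsum - hprod
  have hx0 : x₁ ≠ 0 := by
    intro h
    exact mul_ne_zero (pow_ne_zero 2 hq) hct (by rw [← hx1sq, h]; ring)
  have hInt' : ∀ j : ℕ, Int (X ^ j) = mu q x₁ (-x₁) j := by
    intro j; rw [hInt j, hx2eq]
  -- action of L on monomials
  have hL1 : L (1 : ℂ[X]) = 0 := by rw [hL, hδm0, mul_zero, map_zero]
  have hLX : L (X : ℂ[X]) = lam q 1 • X := by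
    have hδmX : δm (X : ℂ[X]) = ((q ^ (2 * (0 + 1)) - 1) / (q ^ (2 * 0) * (q ^ 2 - 1))) • 1 := by
      have := hδm 0
      simpa using this
    rw [hL, hδmX, mul_smul_comm, map_smul, mul_one,
      show ((X : ℂ[X]) ^ 2) = X ^ (1 + 1) from by ring, map_sub, hδp 1]
    have : δp (C (ct * q ^ 2) : ℂ[X]) = 0 := by
      rw [show (C (ct * q ^ 2) : ℂ[X]) = (ct * q ^ 2) • 1 from by simp [smul_eq_C_mul],
        map_smul, hδp0, smul_zero]
    rw [this, sub_zero, smul_smul, pow_one]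
    congr 1
    rw [lam_eq q hq]
    norm_num
    field_simp
  have hLmono : ∀ n : ℕ, L (X ^ (n + 2) : ℂ[X]) =
      lam q (n + 2) • X ^ (n + 2) - bb q ct (n + 2) • X ^ n := by
    intro n
    rw [hL, show (X ^ (n + 2) : ℂ[X]) = X ^ ((n + 1) + 1) from by ring, hδm (n + 1),
      mul_smul_comm, map_smul, sub_mul, ← pow_add,
      show 2 + (n + 1) = (n + 2) + 1 from by ring,
      show (C (ct * q ^ 2) : ℂ[X]) * X ^ (n + 1) = (ct * q ^ 2) • X ^ (n + 1) from by
        simp [smul_eq_C_mul],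
      map_sub, map_smul, hδp (n + 2), hδp n, smul_sub, smul_smul, smul_smul, smul_smul]
    congr 1
    · congr 1
      rw [lam_eq q hq]
      rw [show 2 * (n + 2) = 2 * (n + 1) + 2 from by ring,
        show 2 * (n + 2 + 1) = 2 * (n + 1) + 4 from by ring, pow_add, pow_add]
      exact coeff1 q (q ^ (2 * (n + 1))) hq (pow_ne_zero _ hq) h1
    · congr 1
      rw [bb, show 2 * (n + 2) = 2 * (n + 1) + 2 from by ring, pow_add]
      exact coeff2 q (q ^ (2 * (n + 1))) ct hq (pow_ne_zero _ hq) h1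
  -- moments of L on monomials
  have hB : ∀ n m : ℕ, Int (L (X ^ n) * X ^ m) =
      lam q n * mu q x₁ (-x₁) (n + m) - bb q ct n * mu q x₁ (-x₁) (n + m - 2) := by
    intro n m
    match n with
    | 0 => simp [hL1, lam_zero, bb_zero]
    | 1 =>
      rw [pow_one, hLX, smul_mul_assoc, map_smul,
        show (X : ℂ[X]) * X ^ m = X ^ (1 + m) from by rw [pow_add, pow_one], hInt',
        bb_one, smul_eq_mul]
      ring
    | (n + 2) =>
      rw [hLmono n, sub_mul, smul_mul_assoc, smul_mul_assoc, ← pow_add, ← pow_add,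
        map_sub, map_smul, map_smul, hInt', hInt', smul_eq_mul, smul_eq_mul,
        show n + m = n + 2 + m - 2 from by omega]
  -- symmetry on monomials
  have hsymX : ∀ n m : ℕ, Int (L (X ^ n) * X ^ m) = Int (X ^ n * L (X ^ m)) := by
    intro n m
    rw [mul_comm (X ^ n : ℂ[X]), hB n m, hB m n, Nat.add_comm m n]
    exact master q ct x₁ hq h1 hone hx0 hx1sq n m
  -- symmetry in general
  have hsym : ∀ f g : ℂ[X], Int (L f * g) = Int (f * L g) := by
    intro f g
    induction f using Polynomial.induction_on' with
    | add p r hp hr => rw [map_add, add_mul, add_mul, map_add, hp, hr, map_add]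
    | monomial n a =>
      induction g using Polynomial.induction_on' with
      | add p r hp hr => rw [map_add, mul_add, mul_add, map_add, hp, hr, map_add]
      | monomial m b =>
        rw [show (monomial n a : ℂ[X]) = a • X ^ n from by
              rw [smul_eq_C_mul, C_mul_X_pow_eq_monomial],
            show (monomial m b : ℂ[X]) = b • X ^ m from by
              rw [smul_eq_C_mul, C_mul_X_pow_eq_monomial],
            map_smul, map_smul, smul_mul_assoc, smul_mul_assoc, mul_smul_comm,
            mul_smul_comm, map_smul, map_smul, map_smul, map_smul,
            smul_eq_mul, smul_eq_mul, smul_eq_mul, smul_eq_mul, hsymX n m]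
  -- eigenvalue argument
  have heq : lam q k * Int (P * Q) = lam q l * Int (P * Q) := by
    have h := hsym P Q
    rw [hPeig, hQeig, smul_mul_assoc, mul_smul_comm, map_smul, map_smul,
      smul_eq_mul, smul_eq_mul] at h
    exact h
  have hlamne : lam q k ≠ lam q l := by
    rcases Nat.lt_or_ge k l with h | h
    · exact (hsep l k h (le_max_right k l)).symm
    · exact hsep k l (by omega) (le_max_left k l)
  by_contra hcon
  exact hlamne (mul_right_cancel₀ hcon heq)


end
end
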